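/- Let (X_i, d_i, μ_i), i = 1, 2, be compact measured metric spaces. Define the Gromov–Hausdorff–Prokhorov distance d_GHP(X₁, X₂) = inf over correspondences C ⊆ X₁×X₂ and measures π on X₁×X₂ of max( (1/2)·dis(C), D(π; μ₁, μ₂), π(Cᶜ) ), where dis(C) = sup{|d₁(x₁,y₁) − d₂(x₂,y₂)| : (x₁,x₂),(y₁,y₂) ∈ C} and D(π;μ₁,μ₂) = ‖μ₁ − π₁‖ + ‖μ₂ − π₂‖ is the total-variation discrepancy of the marginals. Then d_GHP is a pseudometric on the collection of compact measured metric spaces, i.e., it is symmetric and satisfies the triangle inequality. -/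

import Mathlib

/-!
Symmetry is transport along `Prod.swap`. For the triangle inequality, take admissible data
`(C₁, π₁)` for `(Y, X)` and `(C₂, π₂)` for `(Y, Z)`. Replacing `Cᵢ` by its closure increases
neither the distortion nor the mass outside, and compactness of `Y` makes the composite
`{(x, z) | ∃ y, (y, x) ∈ C₁ ∧ (y, z) ∈ C₂}` closed, hence measurable; its distortion is at most
`dis C₁ + dis C₂`. For the measures, glue the conditional kernels of `π₁` and `π₂` given `Y` over
the common part `η` of the two `Y`-marginals (read off a Hahn decomposition). The glued measure
misses the composite on at most `π₁ C₁ᶜ + π₂ C₂ᶜ`, and its marginals fall short of `π₁.snd` and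
`π₂.snd` by a total mass of at most `‖π₁.fst − π₂.fst‖ ≤ ‖π₁.fst − ν‖ + ‖ν − π₂.fst‖`.
-/

open MeasureTheory

/-- Total variation norm `‖μ − ν‖` of the difference of two finite measures. -/
noncomputable def tvNorm {X : Type} [MeasurableSpace X] (μ ν : Measure X) : ℝ :=
  sSup {r : ℝ | ∃ A : Set X, MeasurableSet A ∧ r = (μ A).toReal - (ν A).toReal} +
    sSup {r : ℝ | ∃ A : Set X, MeasurableSet A ∧ r = (ν A).toReal - (μ A).toReal}

/-- The distortion of a subset `C ⊆ X₁ × X₂`: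
`sup{|d₁(x₁,y₁) − d₂(x₂,y₂)| : (x₁,x₂),(y₁,y₂) ∈ C}`. -/
noncomputable def corrDistortion {X Y : Type} [MetricSpace X] [MetricSpace Y]
    (C : Set (X × Y)) : ℝ :=
  sSup ((fun q : (X × Y) × (X × Y) => |dist q.1.1 q.2.1 - dist q.1.2 q.2.2|) '' (C ×ˢ C))

/-- The Gromov–Hausdorff–Prokhorov distance between two measured metric spaces:
infimum over measurable correspondences `C` and finite measures `π` on the product of
`max((1/2) dis(C), ‖μ₁ − π₁‖ + ‖μ₂ − π₂‖, π(Cᶜ))`. -/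
noncomputable def dGHP (X Y : Type) [MetricSpace X] [MeasurableSpace X]
    [MetricSpace Y] [MeasurableSpace Y] (μ : Measure X) (ν : Measure Y) : ℝ :=
  sInf {r : ℝ |
    ∃ C : Set (X × Y), MeasurableSet C ∧
      (∀ x : X, ∃ y : Y, (x, y) ∈ C) ∧ (∀ y : Y, ∃ x : X, (x, y) ∈ C) ∧
      ∃ π : Measure (X × Y), IsFiniteMeasure π ∧
        max (max ((1 / 2) * corrDistortion C) (tvNorm μ π.fst + tvNorm ν π.snd))
          ((π Cᶜ).toReal) ≤ r}

open ProbabilityTheory Set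

section TotalVariation

variable {α : Type} [MeasurableSpace α]

noncomputable def tvExcess (μ ν : Measure α) : ℝ :=
  sSup {r : ℝ | ∃ A : Set α, MeasurableSet A ∧ r = (μ A).toReal - (ν A).toReal}

theorem tvNorm_eq_tvExcess_add (μ ν : Measure α) : tvNorm μ ν = tvExcess μ ν + tvExcess ν μ :=
  rfl

theorem tvNorm_comm (μ ν : Measure α) : tvNorm μ ν = tvNorm ν μ := by
  rw [tvNorm_eq_tvExcess_add, tvNorm_eq_tvExcess_add, add_comm]

variable {μ ν ρ : Measure α}

theorem le_tvExcess [IsFiniteMeasure μ] {A : Set α} (hA : MeasurableSet A) :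
    (μ A).toReal - (ν A).toReal ≤ tvExcess μ ν := by
  refine le_csSup ⟨(μ univ).toReal, ?_⟩ ⟨A, hA, rfl⟩
  rintro r ⟨B, -, rfl⟩
  have hB := ENNReal.toReal_mono (measure_ne_top μ univ) (measure_mono (subset_univ B))
  linarith [ENNReal.toReal_nonneg (a := ν B)]

theorem tvExcess_le {c : ℝ}
    (h : ∀ A : Set α, MeasurableSet A → (μ A).toReal - (ν A).toReal ≤ c) : tvExcess μ ν ≤ c :=
  Real.sSup_le (by rintro r ⟨A, hA, rfl⟩; exact h A hA) (by simpa using h ∅ .empty)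

theorem tvExcess_le_add [IsFiniteMeasure μ] [IsFiniteMeasure ν] :
    tvExcess μ ρ ≤ tvExcess μ ν + tvExcess ν ρ :=
  tvExcess_le fun _ hA => by
    linarith [le_tvExcess (μ := μ) (ν := ν) hA, le_tvExcess (μ := ν) (ν := ρ) hA]

theorem tvNorm_le_add [IsFiniteMeasure μ] [IsFiniteMeasure ν] [IsFiniteMeasure ρ] :
    tvNorm μ ρ ≤ tvNorm μ ν + tvNorm ν ρ := by
  simp only [tvNorm_eq_tvExcess_add]
  linarith [tvExcess_le_add (μ := μ) (ν := ν) (ρ := ρ), tvExcess_le_add (μ := ρ) (ν := ν) (ρ := μ)]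

theorem tvNorm_le_add_of_le {ν' : Measure α} [IsFiniteMeasure μ] [IsFiniteMeasure ν]
    (h : ν' ≤ ν) : tvNorm μ ν' ≤ tvNorm μ ν + ((ν univ).toReal - (ν' univ).toReal) := by
  have : IsFiniteMeasure ν' := isFiniteMeasure_of_le ν h
  have lost : ∀ A, MeasurableSet A →
      (ν A).toReal - (ν' A).toReal ≤ (ν univ).toReal - (ν' univ).toReal := by
    intro A hA
    have hAc := ENNReal.toReal_mono (measure_ne_top ν Aᶜ) (h Aᶜ)
    rw [← measure_add_measure_compl hA, ← measure_add_measure_compl (μ := ν') hA,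
      ENNReal.toReal_add (measure_ne_top _ _) (measure_ne_top _ _),
      ENNReal.toReal_add (measure_ne_top _ _) (measure_ne_top _ _)]
    linarith
  have h₁ : tvExcess μ ν' ≤ tvExcess μ ν + ((ν univ).toReal - (ν' univ).toReal) :=
    tvExcess_le fun A hA => by linarith [le_tvExcess (μ := μ) (ν := ν) hA, lost A hA]
  have h₂ : tvExcess ν' μ ≤ tvExcess ν μ :=
    tvExcess_le fun A hA => by
      linarith [le_tvExcess (μ := ν) (ν := μ) hA, ENNReal.toReal_mono (measure_ne_top ν A) (h A)]
  rw [tvNorm_eq_tvExcess_add, tvNorm_eq_tvExcess_add]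
  linarith

/-- The witness is `ν` on the positive set `E` of a Hahn decomposition of `μ - ν`, `μ` off it. -/
theorem exists_le_le_tvNorm (μ ν : Measure α) [IsFiniteMeasure μ] [IsFiniteMeasure ν] :
    ∃ η ≤ μ, η ≤ ν ∧ (μ univ).toReal + (ν univ).toReal - 2 * (η univ).toReal ≤ tvNorm μ ν := by
  obtain ⟨E, hE, hνμ, hμν⟩ := hahn_decomposition μ ν
  have apply_eq : ∀ s, MeasurableSet s →
      (ν.restrict E + μ.restrict Eᶜ) s = ν (s ∩ E) + μ (s ∩ Eᶜ) := fun s hs => by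
    rw [Measure.add_apply, Measure.restrict_apply hs, Measure.restrict_apply hs]
  refine ⟨ν.restrict E + μ.restrict Eᶜ, Measure.le_iff.2 fun s hs => ?_,
    Measure.le_iff.2 fun s hs => ?_, ?_⟩
  · rw [apply_eq s hs, ← measure_inter_add_sdiff s hE]
    exact add_le_add (hνμ _ (hs.inter hE) inter_subset_right) le_rfl
  · rw [apply_eq s hs, ← measure_inter_add_sdiff s hE]
    exact add_le_add le_rfl (hμν _ (hs.inter hE.compl) inter_subset_right)
  · rw [apply_eq _ .univ, univ_inter, univ_inter, ← measure_add_measure_compl (μ := μ) hE,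
      ← measure_add_measure_compl (μ := ν) hE]
    simp only [ENNReal.toReal_add (measure_ne_top _ _) (measure_ne_top _ _)]
    rw [tvNorm_eq_tvExcess_add]
    linarith [le_tvExcess (μ := μ) (ν := ν) hE, le_tvExcess (μ := ν) (ν := μ) hE.compl]

end TotalVariation

section Correspondence

variable {X Y Z : Type*}

def IsCorrespondence (C : Set (X × Y)) : Prop :=
  (∀ x, ∃ y, (x, y) ∈ C) ∧ ∀ y, ∃ x, (x, y) ∈ C

/-- The composite `K₁⁻¹ ∘ K₂`: the paper's `C₁₂ ∘ C₂₃`, with `C₁₂` stored as a relation from `Y`. -/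
def corrJoin (K₁ : Set (Y × X)) (K₂ : Set (Y × Z)) : Set (X × Z) :=
  {p | ∃ y, (y, p.1) ∈ K₁ ∧ (y, p.2) ∈ K₂}

theorem IsCorrespondence.mono {C D : Set (X × Y)} (hC : IsCorrespondence C) (h : C ⊆ D) :
    IsCorrespondence D :=
  ⟨fun x => (hC.1 x).imp fun _ hy => h hy, fun y => (hC.2 y).imp fun _ hx => h hx⟩

theorem IsCorrespondence.preimage_swap {C : Set (X × Y)} (hC : IsCorrespondence C) :
    IsCorrespondence (Prod.swap ⁻¹' C) :=
  ⟨hC.2, hC.1⟩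

theorem IsCorrespondence.corrJoin {K₁ : Set (Y × X)} {K₂ : Set (Y × Z)}
    (h₁ : IsCorrespondence K₁) (h₂ : IsCorrespondence K₂) : IsCorrespondence (corrJoin K₁ K₂) := by
  refine ⟨fun x => ?_, fun z => ?_⟩
  · obtain ⟨y, hy⟩ := h₁.2 x
    obtain ⟨z, hz⟩ := h₂.1 y
    exact ⟨z, y, hy, hz⟩
  · obtain ⟨y, hy⟩ := h₂.2 z
    obtain ⟨x, hx⟩ := h₁.1 y
    exact ⟨x, y, hx, hy⟩

theorem IsClosed.corrJoin [TopologicalSpace X] [TopologicalSpace Y] [TopologicalSpace Z]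
    [CompactSpace Y] {K₁ : Set (Y × X)} {K₂ : Set (Y × Z)}
    (h₁ : IsClosed K₁) (h₂ : IsClosed K₂) : IsClosed (corrJoin K₁ K₂) := by
  have : _root_.corrJoin K₁ K₂ =
      Prod.snd '' {p : Y × X × Z | (p.1, p.2.1) ∈ K₁ ∧ (p.1, p.2.2) ∈ K₂} := by
    ext ⟨x, z⟩
    exact ⟨fun ⟨y, hy⟩ => ⟨(y, x, z), hy, rfl⟩, fun ⟨_, hp, hpxz⟩ => hpxz ▸ ⟨_, hp⟩⟩
  rw [this]
  exact isClosedMap_snd_of_compactSpace _ <|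
    (h₁.preimage (continuous_fst.prodMk continuous_snd.fst)).inter
      (h₂.preimage (continuous_fst.prodMk continuous_snd.snd))

end Correspondence

section Distortion

variable {X Y Z : Type} [MetricSpace X] [MetricSpace Y] [MetricSpace Z]

theorem corrDistortion_nonneg (C : Set (X × Y)) : 0 ≤ corrDistortion C :=
  Real.sSup_nonneg <| by rintro _ ⟨_, -, rfl⟩; exact abs_nonneg _

theorem le_corrDistortion [BoundedSpace X] [BoundedSpace Y] {C : Set (X × Y)} {p q : X × Y}
    (hp : p ∈ C) (hq : q ∈ C) : |dist p.1 q.1 - dist p.2 q.2| ≤ corrDistortion C := by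
  refine le_csSup ⟨Metric.diam (univ : Set X) + Metric.diam (univ : Set Y), ?_⟩
    ⟨(p, q), ⟨hp, hq⟩, rfl⟩
  rintro _ ⟨⟨p, q⟩, -, rfl⟩
  have hX := Metric.dist_le_diam_of_mem (Bornology.isBounded_univ.2 ‹_›) (mem_univ p.1)
    (mem_univ q.1)
  have hY := Metric.dist_le_diam_of_mem (Bornology.isBounded_univ.2 ‹_›) (mem_univ p.2)
    (mem_univ q.2)
  rw [abs_le]
  constructor <;> linarith [dist_nonneg (x := p.1) (y := q.1), dist_nonneg (x := p.2) (y := q.2)]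

theorem corrDistortion_le {C : Set (X × Y)} {c : ℝ} (hc : 0 ≤ c)
    (h : ∀ p ∈ C, ∀ q ∈ C, |dist p.1 q.1 - dist p.2 q.2| ≤ c) : corrDistortion C ≤ c :=
  Real.sSup_le (by rintro _ ⟨⟨p, q⟩, ⟨hp, hq⟩, rfl⟩; exact h p hp q hq) hc

theorem corrDistortion_preimage_swap (C : Set (X × Y)) :
    corrDistortion (Prod.swap ⁻¹' C) = corrDistortion C := by
  unfold corrDistortion
  congr 1
  ext r
  constructor <;>
  · rintro ⟨⟨p, q⟩, hpq, rfl⟩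
    exact ⟨(p.swap, q.swap), hpq, abs_sub_comm _ _⟩

theorem corrDistortion_closure_le [BoundedSpace X] [BoundedSpace Y] (C : Set (X × Y)) :
    corrDistortion (closure C) ≤ corrDistortion C := by
  have hclosed : IsClosed {q : (X × Y) × (X × Y) |
      |dist q.1.1 q.2.1 - dist q.1.2 q.2.2| ≤ corrDistortion C} :=
    isClosed_le (((continuous_fst.fst.dist continuous_snd.fst).sub
      (continuous_fst.snd.dist continuous_snd.snd)).abs) continuous_const
  refine corrDistortion_le (corrDistortion_nonneg C) fun p hp q hq => ?_
  have hsub : C ×ˢ C ⊆ {q : (X × Y) × (X × Y) |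
      |dist q.1.1 q.2.1 - dist q.1.2 q.2.2| ≤ corrDistortion C} :=
    fun q hq => le_corrDistortion hq.1 hq.2
  have hpq : (p, q) ∈ closure (C ×ˢ C) := by rw [closure_prod_eq]; exact ⟨hp, hq⟩
  exact hclosed.closure_subset_iff.2 hsub hpq

theorem corrDistortion_corrJoin_le [BoundedSpace X] [BoundedSpace Y] [BoundedSpace Z]
    (K₁ : Set (Y × X)) (K₂ : Set (Y × Z)) :
    corrDistortion (corrJoin K₁ K₂) ≤ corrDistortion K₁ + corrDistortion K₂ := by
  refine corrDistortion_le (add_nonneg (corrDistortion_nonneg _) (corrDistortion_nonneg _)) ?_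
  rintro p ⟨y, hp₁, hp₂⟩ q ⟨y', hq₁, hq₂⟩
  have h₁ := le_corrDistortion hp₁ hq₁
  have h₂ := le_corrDistortion hp₂ hq₂
  rw [abs_sub_comm] at h₁
  exact (abs_sub_le _ (dist y y') _).trans (add_le_add h₁ h₂)

end Distortion

theorem MeasureTheory.Measure.compProd_mono_left {α β : Type*} [MeasurableSpace α]
    [MeasurableSpace β] {μ ν : Measure α} [SFinite μ] [SFinite ν] (κ : Kernel α β)
    [IsSFiniteKernel κ] (h : μ ≤ ν) : μ ⊗ₘ κ ≤ ν ⊗ₘ κ :=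
  Measure.le_iff.2 fun s hs => by
    rw [Measure.compProd_apply hs, Measure.compProd_apply hs]
    exact lintegral_mono' h le_rfl

section Gluing

variable {X Y Z : Type*} [MeasurableSpace X] [MeasurableSpace Y] [MeasurableSpace Z]

theorem measure_compl_corrJoin_le (γ : Measure (Y × X × Z)) {K₁ : Set (Y × X)} {K₂ : Set (Y × Z)}
    (hK : MeasurableSet (corrJoin K₁ K₂)) :
    γ.snd (corrJoin K₁ K₂)ᶜ ≤
      γ.map (fun p => (p.1, p.2.1)) K₁ᶜ + γ.map (fun p => (p.1, p.2.2)) K₂ᶜ := by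
  have hsub : Prod.snd ⁻¹' (corrJoin K₁ K₂)ᶜ ⊆
      (fun p : Y × X × Z => (p.1, p.2.1)) ⁻¹' K₁ᶜ ∪ (fun p => (p.1, p.2.2)) ⁻¹' K₂ᶜ := by
    rintro ⟨y, x, z⟩ hp
    by_contra! h
    simp only [mem_union, mem_preimage, mem_compl_iff, not_not, not_or] at h
    exact hp ⟨y, h⟩
  calc γ.snd (corrJoin K₁ K₂)ᶜ
      ≤ γ ((fun p : Y × X × Z => (p.1, p.2.1)) ⁻¹' K₁ᶜ ∪ (fun p => (p.1, p.2.2)) ⁻¹' K₂ᶜ) := by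
        rw [Measure.snd_apply hK.compl]
        exact measure_mono hsub
    _ ≤ _ := measure_union_le _ _
    _ ≤ _ := add_le_add (Measure.le_map_apply (by fun_prop) _)
        (Measure.le_map_apply (by fun_prop) _)

variable [StandardBorelSpace X] [Nonempty X] [StandardBorelSpace Z] [Nonempty Z]
  (π₁ : Measure (Y × X)) (π₂ : Measure (Y × Z)) [IsFiniteMeasure π₁] [IsFiniteMeasure π₂]
  {η : Measure Y}

/-- The witness is `η ⊗ (κ₁ ×ₖ κ₂)`, with `κᵢ` the conditional kernel of `πᵢ` given `Y`. -/
theorem exists_gluing_of_le_fst (h₁ : η ≤ π₁.fst) (h₂ : η ≤ π₂.fst) :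
    ∃ γ : Measure (Y × X × Z), IsFiniteMeasure γ ∧ γ.map (fun p => (p.1, p.2.1)) ≤ π₁ ∧
      γ.map (fun p => (p.1, p.2.2)) ≤ π₂ ∧ γ univ = η univ := by
  have := isFiniteMeasure_of_le _ h₁
  refine ⟨η ⊗ₘ (π₁.condKernel ×ₖ π₂.condKernel), inferInstance, ?_, ?_,
    Measure.compProd_apply_univ⟩
  · calc (η ⊗ₘ (π₁.condKernel ×ₖ π₂.condKernel)).map (Prod.map id Prod.fst)
        = η ⊗ₘ π₁.condKernel := by
          rw [← Measure.compProd_map measurable_fst, ← Kernel.fst_eq, Kernel.fst_prod]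
      _ ≤ π₁.fst ⊗ₘ π₁.condKernel := Measure.compProd_mono_left _ h₁
      _ = π₁ := π₁.disintegrate _
  · calc (η ⊗ₘ (π₁.condKernel ×ₖ π₂.condKernel)).map (Prod.map id Prod.snd)
        = η ⊗ₘ π₂.condKernel := by
          rw [← Measure.compProd_map measurable_snd, ← Kernel.snd_eq, Kernel.snd_prod]
      _ ≤ π₂.fst ⊗ₘ π₂.condKernel := Measure.compProd_mono_left _ h₂
      _ = π₂ := π₂.disintegrate _

/-- The coupling of `X` and `Z` obtained by gluing `π₁` and `π₂` along `η`. -/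
theorem exists_coupling_of_le_fst (h₁ : η ≤ π₁.fst) (h₂ : η ≤ π₂.fst) :
    ∃ π : Measure (X × Z), IsFiniteMeasure π ∧ π.fst ≤ π₁.snd ∧ π.snd ≤ π₂.snd ∧
      π univ = η univ ∧ ∀ K₁ K₂, MeasurableSet (corrJoin K₁ K₂) →
        π (corrJoin K₁ K₂)ᶜ ≤ π₁ K₁ᶜ + π₂ K₂ᶜ := by
  obtain ⟨γ, _, hγ₁, hγ₂, hγ_univ⟩ := exists_gluing_of_le_fst π₁ π₂ h₁ h₂
  refine ⟨γ.snd, inferInstance, ?_, ?_, by rw [Measure.snd_univ, hγ_univ], fun K₁ K₂ hK =>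
    (measure_compl_corrJoin_le γ hK).trans (add_le_add (hγ₁ _) (hγ₂ _))⟩
  · have : γ.snd.fst = (γ.map (fun p => (p.1, p.2.1))).snd := by
      simp only [Measure.fst, Measure.snd]
      rw [Measure.map_map (by fun_prop) (by fun_prop), Measure.map_map (by fun_prop) (by fun_prop)]
      rfl
    exact this ▸ Measure.snd_mono hγ₁
  · have : γ.snd.snd = (γ.map (fun p => (p.1, p.2.2))).snd := by
      simp only [Measure.snd]
      rw [Measure.map_map (by fun_prop) (by fun_prop), Measure.map_map (by fun_prop) (by fun_prop)]
      rfl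
    exact this ▸ Measure.snd_mono hγ₂

end Gluing

section GHP

variable {X Y Z : Type} [MetricSpace X] [MeasurableSpace X] [MetricSpace Y] [MeasurableSpace Y]
  [MetricSpace Z] [MeasurableSpace Z] {μ : Measure X} {ν : Measure Y} {ρ : Measure Z}

noncomputable def ghpCost (μ : Measure X) (ν : Measure Y) (C : Set (X × Y))
    (π : Measure (X × Y)) : ℝ :=
  max (max ((1 / 2) * corrDistortion C) (tvNorm μ π.fst + tvNorm ν π.snd)) (π Cᶜ).toReal

def ghpValues (μ : Measure X) (ν : Measure Y) : Set ℝ :=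
  {r | ∃ C : Set (X × Y), MeasurableSet C ∧ IsCorrespondence C ∧
    ∃ π : Measure (X × Y), IsFiniteMeasure π ∧ ghpCost μ ν C π ≤ r}

theorem dGHP_eq_sInf_ghpValues (μ : Measure X) (ν : Measure Y) :
    dGHP X Y μ ν = sInf (ghpValues μ ν) := by
  simp only [dGHP, ghpValues, IsCorrespondence, ghpCost, and_assoc]

theorem ghpCost_nonneg (C : Set (X × Y)) (π : Measure (X × Y)) : 0 ≤ ghpCost μ ν C π :=
  le_max_of_le_right ENNReal.toReal_nonneg

theorem ghpValues_bddBelow : BddBelow (ghpValues μ ν) :=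
  ⟨0, fun _ ⟨C, _, _, π, _, h⟩ => (ghpCost_nonneg C π).trans h⟩

theorem ghpValues_nonempty [Nonempty X] [Nonempty Y] : (ghpValues μ ν).Nonempty :=
  ⟨_, univ, .univ, ⟨fun _ => ⟨Classical.arbitrary Y, trivial⟩,
    fun _ => ⟨Classical.arbitrary X, trivial⟩⟩, 0, inferInstance, le_rfl⟩

theorem ghpCost_swap (C : Set (X × Y)) (π : Measure (X × Y)) :
    ghpCost ν μ (Prod.swap ⁻¹' C) (π.map Prod.swap) = ghpCost μ ν C π := by
  have hcompl : π.map Prod.swap (Prod.swap ⁻¹' C)ᶜ = π Cᶜ :=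
    MeasurableEquiv.prodComm.map_apply _
  rw [ghpCost, ghpCost, corrDistortion_preimage_swap, Measure.fst_map_swap,
    Measure.snd_map_swap, add_comm (tvNorm ν _), hcompl]

theorem ghpValues_subset_swap : ghpValues μ ν ⊆ ghpValues ν μ :=
  fun _ ⟨C, hC, hCcorr, π, _, h⟩ => ⟨Prod.swap ⁻¹' C, hC.preimage measurable_swap,
    hCcorr.preimage_swap, π.map Prod.swap, inferInstance, (ghpCost_swap C π).trans_le h⟩

theorem ghpValues_comm : ghpValues μ ν = ghpValues ν μ :=
  ghpValues_subset_swap.antisymm ghpValues_subset_swap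

theorem ghpCost_closure_le [BoundedSpace X] [BoundedSpace Y] (C : Set (X × Y))
    (π : Measure (X × Y)) [IsFiniteMeasure π] : ghpCost μ ν (closure C) π ≤ ghpCost μ ν C π :=
  max_le_max (max_le_max (by linarith [corrDistortion_closure_le C]) le_rfl)
    (ENNReal.toReal_mono (measure_ne_top _ _) (measure_mono (compl_subset_compl.2 subset_closure)))

theorem exists_isClosed_of_mem_ghpValues [BoundedSpace X] [BoundedSpace Y] {r : ℝ}
    (hr : r ∈ ghpValues μ ν) :
    ∃ C : Set (X × Y), IsClosed C ∧ IsCorrespondence C ∧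
      ∃ π : Measure (X × Y), IsFiniteMeasure π ∧ ghpCost μ ν C π ≤ r := by
  obtain ⟨C, -, hCcorr, π, _, h⟩ := hr
  exact ⟨closure C, isClosed_closure, hCcorr.mono subset_closure, π, inferInstance,
    (ghpCost_closure_le C π).trans h⟩

theorem add_mem_ghpValues [CompactSpace X] [BorelSpace X] [Nonempty X]
    [CompactSpace Y] [CompactSpace Z] [BorelSpace Z] [Nonempty Z]
    [IsFiniteMeasure μ] [IsFiniteMeasure ν] [IsFiniteMeasure ρ] {r s : ℝ}
    (hr : r ∈ ghpValues ν μ) (hs : s ∈ ghpValues ν ρ) : r + s ∈ ghpValues μ ρ := by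
  obtain ⟨C₁, hC₁, hC₁corr, π₁, _, hr⟩ := exists_isClosed_of_mem_ghpValues hr
  obtain ⟨C₂, hC₂, hC₂corr, π₂, _, hs⟩ := exists_isClosed_of_mem_ghpValues hs
  obtain ⟨η, hη₁, hη₂, hη⟩ := exists_le_le_tvNorm π₁.fst π₂.fst
  obtain ⟨π, _, hπ₁, hπ₂, hπ_univ, hπ_compl⟩ := exists_coupling_of_le_fst π₁ π₂ hη₁ hη₂
  have hJ : MeasurableSet (corrJoin C₁ C₂) := (hC₁.corrJoin hC₂).measurableSet
  refine ⟨corrJoin C₁ C₂, hJ, hC₁corr.corrJoin hC₂corr, π, inferInstance, ?_⟩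
  simp only [ghpCost, max_le_iff] at hr hs ⊢
  refine ⟨⟨?_, ?_⟩, ?_⟩
  · linarith [corrDistortion_corrJoin_le C₁ C₂]
  · have h₁ := tvNorm_le_add_of_le (μ := μ) hπ₁
    have h₂ := tvNorm_le_add_of_le (μ := ρ) hπ₂
    have h₃ := tvNorm_le_add (μ := π₁.fst) (ν := ν) (ρ := π₂.fst)
    rw [Measure.snd_univ, Measure.fst_univ, hπ_univ] at h₁
    rw [Measure.snd_univ, Measure.snd_univ, hπ_univ] at h₂
    rw [Measure.fst_univ, Measure.fst_univ] at hη
    rw [tvNorm_comm π₁.fst ν] at h₃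
    linarith
  · have h := ENNReal.toReal_mono (by finiteness) (hπ_compl C₁ C₂ hJ)
    rw [ENNReal.toReal_add (measure_ne_top _ _) (measure_ne_top _ _)] at h
    linarith

end GHP

theorem dGHP_pseudometric_general
    (X Y Z : Type)
    [MetricSpace X] [CompactSpace X] [Nonempty X] [MeasurableSpace X] [BorelSpace X]
    [MetricSpace Y] [CompactSpace Y] [Nonempty Y] [MeasurableSpace Y]
    [MetricSpace Z] [CompactSpace Z] [Nonempty Z] [MeasurableSpace Z] [BorelSpace Z]
    (μ : Measure X) [IsFiniteMeasure μ]
    (ν : Measure Y) [IsFiniteMeasure ν]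
    (ρ : Measure Z) [IsFiniteMeasure ρ] :
    dGHP X Y μ ν = dGHP Y X ν μ ∧
    dGHP X Z μ ρ ≤ dGHP X Y μ ν + dGHP Y Z ν ρ := by
  simp only [dGHP_eq_sInf_ghpValues]
  refine ⟨by rw [ghpValues_comm], ?_⟩
  rw [← csInf_add ghpValues_nonempty ghpValues_bddBelow ghpValues_nonempty ghpValues_bddBelow,
    ghpValues_comm (μ := μ) (ν := ν)]
  refine csInf_le_csInf ghpValues_bddBelow
    (ghpValues_nonempty.add ghpValues_nonempty) ?_
  rintro _ ⟨r, hr, s, hs, rfl⟩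
  exact add_mem_ghpValues hr hs

/-- `d_GHP` is a pseudometric on compact measured metric spaces: it is symmetric and
satisfies the triangle inequality. -/
theorem dGHP_pseudometric
    (X Y Z : Type)
    [MetricSpace X] [CompactSpace X] [Nonempty X] [MeasurableSpace X] [BorelSpace X]
    [MetricSpace Y] [CompactSpace Y] [Nonempty Y] [MeasurableSpace Y] [BorelSpace Y]
    [MetricSpace Z] [CompactSpace Z] [Nonempty Z] [MeasurableSpace Z] [BorelSpace Z]
    (μ : Measure X) [IsFiniteMeasure μ]
    (ν : Measure Y) [IsFiniteMeasure ν]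
    (ρ : Measure Z) [IsFiniteMeasure ρ] :
    dGHP X Y μ ν = dGHP Y X ν μ ∧
    dGHP X Z μ ρ ≤ dGHP X Y μ ν + dGHP Y Z ν ρ :=
  dGHP_pseudometric_general X Y Z μ ν ρ
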